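/- For every s₀ ∈ ℝ and every L > 0 there exists a constant C > 0, depending only on s₀ and L, with the following property: for every bounded interval (x_-, x_+) of length d = x_+ - x_- with 0 < d < L and s₀ < (π/d)², midpoint y = (x_- + x_+)/2, every α ∈ ℝ with F_d^D(s₀) ≤ α < 0, and every u ∈ W^{1,2}(x_-, x_+), one has ∫_{x_-}^{x_+} |u'(x)|² dx + α·|u(y)|² + (C/d²)·∫_{x_-}^{x_+} |u(x)|² dx ≥ 0. -/

import Mathlib

open MeasureTheory

open Set

/-- The set `Π_d^D = { (2πk/d)² : k ∈ ℕ, k ≥ 1 }`. -/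
noncomputable def PiD (d : ℝ) : Set ℝ :=
  {x | ∃ k : ℕ, 1 ≤ k ∧ x = (2 * Real.pi * k / d) ^ 2}

/-- The function `F_d^D`. -/
noncomputable def FD (d lam : ℝ) : ℝ :=
  if 0 < lam then
    -2 * Real.sqrt lam * (Real.cos (d * Real.sqrt lam / 2) / Real.sin (d * Real.sqrt lam / 2))
  else if lam = 0 then -4 / d
  else
    -2 * Real.sqrt (-lam) *
      (Real.cosh (d * Real.sqrt (-lam) / 2) / Real.sinh (d * Real.sqrt (-lam) / 2))

/-- `u ∈ W^{1,2}(x₋, x₊)` with (a.e.) derivative `g`: `u` is absolutely continuous on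
`[x₋, x₊]` — encoded by the integral representation `u(x) = u(x₋) + ∫_{x₋}^x g(t) dt` —
and `g` is square integrable on `(x₋, x₊)`. -/
def HasW12Deriv (xm xp : ℝ) (u g : ℝ → ℂ) : Prop :=
  IntegrableOn (fun x => ‖g x‖ ^ 2) (Set.Ioo xm xp) volume ∧
  ∀ x ∈ Set.Icc xm xp, u x = u xm + ∫ t in xm..x, g t

lemma sq_setIntegral_le {s : Set ℝ} (hs : MeasurableSet s) (hfin : volume s ≠ ⊤)
    {f : ℝ → ℝ} (hnn : ∀ x, 0 ≤ f x)
    (hf : IntegrableOn f s volume) (hf2 : IntegrableOn (fun x => f x ^ 2) s volume) :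
    (∫ x in s, f x) ^ 2 ≤ (volume s).toReal * ∫ x in s, f x ^ 2 := by
  set I := ∫ x in s, f x with hIdef
  set m := (volume s).toReal with hmdef
  set Q := ∫ x in s, f x ^ 2 with hQdef
  have hI : 0 ≤ I := setIntegral_nonneg hs fun x _ => hnn x
  have hQ : 0 ≤ Q := setIntegral_nonneg hs fun x _ => sq_nonneg _
  have hm : 0 ≤ m := ENNReal.toReal_nonneg
  have key : ∀ c : ℝ, 0 < c → I ≤ c * m / 2 + Q / (2 * c) := by
    intro c hc
    have hint : IntegrableOn (fun x => c / 2 + f x ^ 2 / (2 * c)) s volume := by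
      apply Integrable.add
      · exact integrableOn_const hfin
      · exact hf2.div_const _
    have hmono : I ≤ ∫ x in s, (c / 2 + f x ^ 2 / (2 * c)) := by
      apply setIntegral_mono_on hf hint hs
      intro x _
      rw [div_add_div _ _ (by norm_num : (2:ℝ) ≠ 0) (by positivity : (2*c) ≠ 0),
        le_div_iff₀ (by positivity)]
      nlinarith [sq_nonneg (f x - c), hnn x]
    have heq : ∫ x in s, (c / 2 + f x ^ 2 / (2 * c)) = c * m / 2 + Q / (2 * c) := by
      rw [integral_add (integrableOn_const (C := c / 2) hfin) (hf2.div_const _),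
        setIntegral_const, measureReal_def, integral_div, smul_eq_mul]
      ring
    linarith [heq ▸ hmono]
  rcases eq_or_lt_of_le hQ with hQ0 | hQpos
  · have hI0 : I ≤ 0 := by
      apply le_of_forall_pos_le_add
      intro ε hε
      have hc : 0 < 2 * ε / (m + 1) := by positivity
      have := key _ hc
      have h1 : (2 * ε / (m + 1)) * m / 2 ≤ ε := by
        rw [div_mul_eq_mul_div, div_div, div_le_iff₀ (by positivity)]
        nlinarith
      have h2 : Q / (2 * (2 * ε / (m + 1))) = 0 := by rw [← hQ0]; simp
      linarith
    have : I = 0 := le_antisymm hI0 hI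
    rw [this, ← hQ0]
    simp
  · have hmpos : 0 < m := by
      rcases hm.lt_or_eq with h | h
      · exact h
      · exfalso
        have hs0 : volume s = 0 := by
          have := ENNReal.toReal_eq_zero_iff (volume s)
          rcases this.mp h.symm with h' | h'
          · exact h'
          · exact absurd h' hfin
        have : Q = 0 := by
          rw [hQdef, Measure.restrict_eq_zero.mpr hs0, integral_zero_measure]
        linarith
    set c := Real.sqrt (Q / m) with hcdef
    have hc : 0 < c := Real.sqrt_pos.mpr (div_pos hQpos hmpos)
    have hc2 : c ^ 2 = Q / m := Real.sq_sqrt (div_pos hQpos hmpos).le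
    have hQcm : Q = c ^ 2 * m := by rw [hc2]; field_simp
    have := key c hc
    have hQc : Q / (2 * c) = c * m / 2 := by
      rw [hQcm]; field_simp
    have hIcm : I ≤ c * m := by linarith [hQc ▸ this]
    calc I ^ 2 ≤ (c * m) ^ 2 := by nlinarith
      _ = m * Q := by rw [hQcm]; ring

lemma FD_lower (s₀ L d : ℝ) (hd : 0 < d) (hdL : d < L) (hs : s₀ < (Real.pi / d) ^ 2) :
    -((2 * Real.pi + 4 + 2 * L * Real.sqrt (max (-s₀) 0)) / d) ≤ FD d s₀ := by
  have hpi := Real.pi_pos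
  have hsqrt0 : 0 ≤ Real.sqrt (max (-s₀) 0) := Real.sqrt_nonneg _
  set K := 2 * Real.pi + 4 + 2 * L * Real.sqrt (max (-s₀) 0) with hKdef
  have hK4 : 4 ≤ K := by nlinarith
  rcases lt_trichotomy s₀ 0 with hneg | hzero | hpos
  · -- s₀ < 0
    have h1 : ¬ (0 < s₀) := by linarith
    have h2 : s₀ ≠ 0 := hneg.ne
    rw [FD, if_neg h1, if_neg h2]
    set r := Real.sqrt (-s₀) with hrdef
    have hr : 0 < r := Real.sqrt_pos.mpr (by linarith)
    set m := d * r / 2 with hmdef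
    have hm : 0 < m := by positivity
    have hsinh : 0 < Real.sinh m := Real.sinh_pos_iff.mpr hm
    have hmax : Real.sqrt (max (-s₀) 0) = r := by
      rw [hrdef, max_eq_left (by linarith : (0:ℝ) ≤ -s₀)]
    have hco : Real.cosh m / Real.sinh m ≤ 1 + 1 / m := by
      have hcs : Real.cosh m = Real.sinh m + Real.exp (-m) := by
        have := Real.cosh_sub_sinh m; linarith
      have hexp : Real.exp (-m) ≤ 1 := Real.exp_le_one_iff.mpr (by linarith)
      have hms : m ≤ Real.sinh m := (Real.self_lt_sinh_iff.mpr hm).le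
      have : Real.exp (-m) / Real.sinh m ≤ 1 / m := div_le_div₀ zero_le_one hexp hm hms
      rw [hcs, add_div, div_self hsinh.ne']
      linarith
    have hrm : 2 * r / m = 4 / d := by rw [hmdef]; field_simp; ring
    have hbound : 2 * r * (Real.cosh m / Real.sinh m) ≤ K / d := by
      have h3 : 2 * r * (Real.cosh m / Real.sinh m) ≤ 2 * r * (1 + 1 / m) :=
        mul_le_mul_of_nonneg_left hco (by positivity)
      have h4 : 2 * r * (1 + 1 / m) = 2 * r + 4 / d := by
        rw [mul_add, mul_one, mul_one_div, hrm]
      have h5 : 2 * r ≤ 2 * L * r / d := by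
        rw [le_div_iff₀ hd]; nlinarith
      have h6 : (2 * L * r + 4) / d = 2 * L * r / d + 4 / d := by ring
      have h7 : (2 * L * r + 4) / d ≤ K / d := by
        rw [div_le_div_iff₀ hd hd, hKdef, hmax]; nlinarith
      linarith
    nlinarith [hbound]
  · -- s₀ = 0
    rw [FD, if_neg (by simp [hzero]), if_pos hzero]
    rw [neg_div, neg_le_neg_iff, div_le_div_iff₀ hd hd]
    nlinarith
  · -- s₀ > 0
    rw [FD, if_pos hpos]
    set r := Real.sqrt s₀ with hrdef
    have hr : 0 < r := Real.sqrt_pos.mpr hpos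
    set t := d * r / 2 with htdef
    have ht : 0 < t := by positivity
    have hrle : r ≤ Real.pi / d := by
      rw [hrdef]
      calc Real.sqrt s₀ ≤ Real.sqrt ((Real.pi / d) ^ 2) := Real.sqrt_le_sqrt hs.le
        _ = Real.pi / d := Real.sqrt_sq (by positivity)
    have ht2 : t ≤ Real.pi / 2 := by
      rw [htdef]
      rw [le_div_iff₀ (by norm_num : (0:ℝ) < 2)] at *
      calc d * r / 2 * 2 = r * d := by ring
        _ ≤ Real.pi / d * d := by nlinarith
        _ = Real.pi := by field_simp
    have hsin : 0 < Real.sin t := Real.sin_pos_of_pos_of_lt_pi ht (by linarith)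
    have hjordan : 2 / Real.pi * t ≤ Real.sin t := Real.mul_le_sin ht.le ht2
    have hcot : Real.cos t / Real.sin t ≤ Real.pi / (2 * t) := by
      rw [div_le_div_iff₀ hsin (by positivity)]
      have hc1 : Real.cos t ≤ 1 := Real.cos_le_one t
      have : 2 * t ≤ Real.pi * Real.sin t := by
        have := mul_le_mul_of_nonneg_left hjordan hpi.le
        calc 2 * t = Real.pi * (2 / Real.pi * t) := by field_simp
          _ ≤ Real.pi * Real.sin t := this
      nlinarith
    have hbound : 2 * r * (Real.cos t / Real.sin t) ≤ K / d := by
      have h3 : 2 * r * (Real.cos t / Real.sin t) ≤ 2 * r * (Real.pi / (2 * t)) :=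
        mul_le_mul_of_nonneg_left hcot (by positivity)
      have h4 : 2 * r * (Real.pi / (2 * t)) = 2 * Real.pi / d := by
        rw [htdef]; field_simp
      have h5 : 2 * Real.pi / d ≤ K / d := by
        rw [div_le_div_iff₀ hd hd, hKdef]
        nlinarith [mul_nonneg (mul_nonneg (by linarith : (0:ℝ) ≤ L) hsqrt0) hd.le]
      linarith
    nlinarith [hbound]

lemma key_trace (xm xp : ℝ) (hlt : xm < xp) (u g : ℝ → ℂ)
    (hg2 : IntegrableOn (fun x => ‖g x‖ ^ 2) (Ioo xm xp) volume)
    (hrep : ∀ x ∈ Icc xm xp, u x = u xm + ∫ t in xm..x, g t)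
    (h : ℝ) (hh : 0 < h) (hh2 : h ≤ (xp - xm) / 4) :
    h * ‖u ((xm + xp) / 2)‖ ^ 2 ≤
      2 * (∫ x in Ioo xm xp, ‖u x‖ ^ 2) + 2 * h ^ 2 * (∫ x in Ioo xm xp, ‖g x‖ ^ 2) := by
  have hd : 0 < xp - xm := sub_pos.mpr hlt
  set y := (xm + xp) / 2 with hydef
  have hy1 : xm < y := by rw [hydef]; linarith
  have hy2 : y < xp := by rw [hydef]; linarith
  have hyIcc : y ∈ Icc xm xp := ⟨hy1.le, hy2.le⟩
  -- measurability of ‖g‖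
  have hgm1 : AEStronglyMeasurable (fun x => ‖g x‖) (volume.restrict (Ioo xm xp)) := by
    have h0 : AEStronglyMeasurable (fun x => ‖g x‖ ^ 2) (volume.restrict (Ioo xm xp)) :=
      hg2.aestronglyMeasurable
    have h1 : AEStronglyMeasurable (fun x => Real.sqrt (‖g x‖ ^ 2))
        (volume.restrict (Ioo xm xp)) := Real.continuous_sqrt.comp_aestronglyMeasurable h0
    have h2 : (fun x => Real.sqrt (‖g x‖ ^ 2)) = fun x => ‖g x‖ :=
      funext fun x => Real.sqrt_sq (norm_nonneg _)
    rwa [h2] at h1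
  -- integrability of ‖g‖
  have hgn : IntegrableOn (fun x => ‖g x‖) (Ioo xm xp) volume := by
    apply Integrable.mono' ((integrableOn_const
      measure_Ioo_lt_top.ne : IntegrableOn (fun _ => (1:ℝ)) _ _).add hg2) hgm1
    apply Filter.Eventually.of_forall
    intro x
    rw [norm_norm]
    simp only [Pi.add_apply]
    nlinarith [sq_nonneg (‖g x‖ - 1), norm_nonneg (g x)]
  have hgnIcc : IntegrableOn (fun x => ‖g x‖) (Icc xm xp) volume :=
    (integrableOn_Icc_iff_integrableOn_Ioo).mpr hgn
  have hg2Icc : IntegrableOn (fun x => ‖g x‖ ^ 2) (Icc xm xp) volume :=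
    (integrableOn_Icc_iff_integrableOn_Ioo).mpr hg2
  set N : ℝ → ℝ := fun z => ∫ t in Ioc xm z, ‖g t‖ with hNdef
  have hNcont : ContinuousOn N (Icc xm xp) := intervalIntegral.continuousOn_primitive hgnIcc
  have hNnonneg : ∀ z, 0 ≤ N z := fun z =>
    setIntegral_nonneg measurableSet_Ioc fun t _ => norm_nonneg _
  have hNle : ∀ z ∈ Icc xm xp, N z ≤ N xp := by
    intro z hz
    apply setIntegral_mono_set (hgnIcc.mono_set Ioc_subset_Icc_self)
      (Filter.Eventually.of_forall fun t => norm_nonneg _)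
      (HasSubset.Subset.eventuallyLE (Ioc_subset_Ioc le_rfl hz.2))
  set A : Set ℝ := {x ∈ Icc xm xp | IntegrableOn g (Ioc xm x) volume} with hAdef
  have hAsub : A ⊆ Icc xm xp := fun x hx => hx.1
  have hAconn : A.OrdConnected := by
    constructor
    intro x1 h1 x2 h2 z hz
    exact ⟨⟨le_trans h1.1.1 hz.1, le_trans hz.2 h2.1.2⟩,
      h2.2.mono_set (Ioc_subset_Ioc le_rfl hz.2)⟩
  have hAmeas : MeasurableSet A := hAconn.measurableSet
  set P : ℝ → ℂ := fun z => ∫ t in Ioc xm z, g t with hPdef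
  -- difference estimate
  have hdiff : ∀ z1 z2, xm ≤ z1 → z1 ≤ z2 → IntegrableOn g (Ioc xm z2) volume →
      ‖P z2 - P z1‖ ≤ N z2 - N z1 := by
    intro z1 z2 hz1 hz12 hint2
    have hu : Ioc xm z1 ∪ Ioc z1 z2 = Ioc xm z2 := Ioc_union_Ioc_eq_Ioc hz1 hz12
    have hdisj : Disjoint (Ioc xm z1) (Ioc z1 z2) := Ioc_disjoint_Ioc_of_le le_rfl
    have hint1 : IntegrableOn g (Ioc xm z1) volume :=
      hint2.mono_set (Ioc_subset_Ioc le_rfl hz12)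
    have hintm : IntegrableOn g (Ioc z1 z2) volume :=
      hint2.mono_set (Ioc_subset_Ioc hz1 le_rfl)
    have hP : P z2 = P z1 + ∫ t in Ioc z1 z2, g t := by
      rw [hPdef]
      simp only
      rw [← hu, setIntegral_union hdisj measurableSet_Ioc hint1 hintm]
    have hgn1 : IntegrableOn (fun t => ‖g t‖) (Ioc xm z1) volume := hint1.norm
    have hgnm : IntegrableOn (fun t => ‖g t‖) (Ioc z1 z2) volume := hintm.norm
    have hN : N z2 = N z1 + ∫ t in Ioc z1 z2, ‖g t‖ := by
      rw [hNdef]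
      simp only
      rw [← hu, setIntegral_union hdisj measurableSet_Ioc hgn1 hgnm]
    rw [hP, hN]
    simp only [add_sub_cancel_left]
    exact norm_integral_le_integral_norm g
  -- continuity of P on A
  have hPA : ContinuousOn P A := by
    rw [Metric.continuousOn_iff]
    intro x₀ hx₀ ε hε
    obtain ⟨δ, hδ, hδ2⟩ := (Metric.continuousOn_iff.mp hNcont) x₀ (hAsub hx₀) ε hε
    refine ⟨δ, hδ, fun z hz hzδ => ?_⟩
    have hNz := hδ2 z (hAsub hz) hzδ
    have key : dist (P z) (P x₀) ≤ dist (N z) (N x₀) := by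
      rcases le_total z x₀ with hle | hle
      · have := hdiff z x₀ (hAsub hz).1 hle hx₀.2
        rw [dist_eq_norm, dist_eq_norm]
        rw [norm_sub_rev]
        calc ‖P x₀ - P z‖ ≤ N x₀ - N z := this
          _ ≤ ‖N z - N x₀‖ := by rw [Real.norm_eq_abs, abs_sub_comm]; exact le_abs_self _
      · have := hdiff x₀ z (hAsub hx₀).1 hle hz.2
        rw [dist_eq_norm, dist_eq_norm]
        calc ‖P z - P x₀‖ ≤ N z - N x₀ := this
          _ ≤ ‖N z - N x₀‖ := le_abs_self _
    linarith [key, hNz]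
  -- P vanishes off A
  have hPB : ∀ z ∈ Icc xm xp \ A, P z = 0 := by
    intro z hz
    apply integral_undef
    intro hcon
    exact hz.2 ⟨hz.1, hcon⟩
  -- a.e. strong measurability of P on Icc
  have hPmeas : AEStronglyMeasurable P (volume.restrict (Icc xm xp)) := by
    have hcover : Icc xm xp = A ∪ (Icc xm xp \ A) := (union_diff_cancel hAsub).symm
    rw [hcover]
    rw [aestronglyMeasurable_union_iff]
    constructor
    · exact hPA.aestronglyMeasurable hAmeas
    · apply aestronglyMeasurable_const.congr
      rw [Filter.EventuallyEq]
      rw [ae_restrict_iff' (measurableSet_Icc.diff hAmeas)]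
      exact Filter.Eventually.of_forall fun z hz => (hPB z hz).symm
  -- u agrees with u xm + P on Icc
  have hurepP : ∀ x ∈ Icc xm xp, u x = u xm + P x := by
    intro x hx
    rw [hrep x hx, hPdef]
    simp only
    rw [intervalIntegral.integral_of_le hx.1]
  have humeas : AEStronglyMeasurable u (volume.restrict (Ioo xm xp)) := by
    have h1 : AEStronglyMeasurable (fun x => u xm + P x) (volume.restrict (Ioo xm xp)) :=
      (aestronglyMeasurable_const.add
        (hPmeas.mono_measure (Measure.restrict_mono Ioo_subset_Icc_self le_rfl)))
    apply h1.congr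
    rw [Filter.EventuallyEq, ae_restrict_iff' measurableSet_Ioo]
    exact Filter.Eventually.of_forall fun x hx => (hurepP x (Ioo_subset_Icc_self hx)).symm
  -- bound on u
  have hubd : ∀ x ∈ Icc xm xp, ‖u x‖ ≤ ‖u xm‖ + N xp := by
    intro x hx
    have hPx : ‖P x‖ ≤ N xp := by
      by_cases hxA : IntegrableOn g (Ioc xm x) volume
      · calc ‖P x‖ ≤ N x := norm_integral_le_integral_norm g
          _ ≤ N xp := hNle x hx
      · have : P x = 0 := integral_undef hxA
        rw [this, norm_zero]
        exact hNnonneg xp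
    calc ‖u x‖ = ‖u xm + P x‖ := by rw [hurepP x hx]
      _ ≤ ‖u xm‖ + ‖P x‖ := norm_add_le _ _
      _ ≤ ‖u xm‖ + N xp := by linarith
  -- integrability of ‖u‖^2
  have hu2 : IntegrableOn (fun x => ‖u x‖ ^ 2) (Ioo xm xp) volume := by
    apply Integrable.mono' (integrableOn_const
      measure_Ioo_lt_top.ne : IntegrableOn (fun _ => (‖u xm‖ + N xp) ^ 2) _ _)
    · have h1 := humeas.norm
      exact (h1.mul h1).congr (Filter.Eventually.of_forall fun x => (sq ‖u x‖).symm)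
    · rw [ae_restrict_iff' measurableSet_Ioo]
      apply Filter.Eventually.of_forall
      intro x hx
      rw [Real.norm_eq_abs, abs_of_nonneg (sq_nonneg _)]
      exact pow_le_pow_left₀ (norm_nonneg _) (hubd x (Ioo_subset_Icc_self hx)) 2
  -- abbreviations
  set G := ∫ x in Ioo xm xp, ‖g x‖ ^ 2 with hGdef
  set U := ∫ x in Ioo xm xp, ‖u x‖ ^ 2 with hUdef
  have hG0 : 0 ≤ G := setIntegral_nonneg measurableSet_Ioo fun x _ => sq_nonneg _
  -- key pointwise bound on a subinterval
  obtain ⟨a, haxm, haxp, hpt⟩ : ∃ a, xm ≤ a ∧ a + h < xp ∧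
      ∀ x ∈ Ioc a (a + h), ‖u y‖ ^ 2 ≤ 2 * ‖u x‖ ^ 2 + 2 * h * G := by
    by_cases hgood : IntervalIntegrable g volume xm y
    · refine ⟨y - h, by linarith, by linarith, ?_⟩
      intro x hx
      have hx1 : y - h < x := hx.1
      have hx2 : x ≤ y := by have := hx.2; linarith
      have hxm : xm < x := by linarith
      have hxIcc : x ∈ Icc xm xp := ⟨hxm.le, by linarith⟩
      have hgoodI : IntegrableOn g (Ioc xm y) volume :=
        (intervalIntegrable_iff_integrableOn_Ioc_of_le hy1.le).mp hgood
      have hIIx : IntervalIntegrable g volume xm x := by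
        rw [intervalIntegrable_iff_integrableOn_Ioc_of_le hxm.le]
        exact hgoodI.mono_set (Ioc_subset_Ioc le_rfl hx2)
      have hIIxy : IntervalIntegrable g volume x y := by
        rw [intervalIntegrable_iff_integrableOn_Ioc_of_le hx2]
        exact hgoodI.mono_set (Ioc_subset_Ioc hxm.le le_rfl)
      have hadd := intervalIntegral.integral_add_adjacent_intervals hIIx hIIxy
      have hdiffu : u y - u x = ∫ t in x..y, g t := by
        rw [hrep y hyIcc, hrep x hxIcc, ← hadd]; ring
      have hsubIoo : Ioc x y ⊆ Ioo xm xp := fun t ht =>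
        ⟨lt_of_lt_of_le hxm ht.1.le, lt_of_le_of_lt ht.2 hy2⟩
      have hnorm : ‖u y - u x‖ ≤ ∫ t in Ioc x y, ‖g t‖ := by
        rw [hdiffu]
        calc ‖∫ t in x..y, g t‖ ≤ ∫ t in x..y, ‖g t‖ :=
              intervalIntegral.norm_integral_le_integral_norm hx2
          _ = ∫ t in Ioc x y, ‖g t‖ := intervalIntegral.integral_of_le hx2
      have hCS : (∫ t in Ioc x y, ‖g t‖) ^ 2 ≤
          (volume (Ioc x y)).toReal * ∫ t in Ioc x y, ‖g t‖ ^ 2 :=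
        sq_setIntegral_le measurableSet_Ioc
          (by rw [Real.volume_Ioc]; exact ENNReal.ofReal_ne_top)
          (fun t => norm_nonneg _) (hgn.mono_set hsubIoo) (hg2.mono_set hsubIoo)
      have hvol : (volume (Ioc x y)).toReal = y - x := by
        rw [Real.volume_Ioc, ENNReal.toReal_ofReal (by linarith)]
      have hG2 : ∫ t in Ioc x y, ‖g t‖ ^ 2 ≤ G := by
        apply setIntegral_mono_set hg2
          (Filter.Eventually.of_forall fun t => sq_nonneg _)
          (HasSubset.Subset.eventuallyLE hsubIoo)
      have hsq : ‖u y - u x‖ ^ 2 ≤ h * G := by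
        have h1 : ‖u y - u x‖ ^ 2 ≤ (∫ t in Ioc x y, ‖g t‖) ^ 2 :=
          pow_le_pow_left₀ (norm_nonneg _) hnorm 2
        have h2 : (volume (Ioc x y)).toReal * ∫ t in Ioc x y, ‖g t‖ ^ 2 ≤ h * G := by
          rw [hvol]
          apply mul_le_mul (by linarith) hG2
            (setIntegral_nonneg measurableSet_Ioc fun t _ => sq_nonneg _) hh.le
        linarith
      have htri : ‖u y‖ ≤ ‖u x‖ + ‖u y - u x‖ := by
        calc ‖u y‖ = ‖u x + (u y - u x)‖ := by ring_nf
          _ ≤ ‖u x‖ + ‖u y - u x‖ := norm_add_le _ _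
      nlinarith [htri, hsq, sq_nonneg (‖u x‖ - ‖u y - u x‖), norm_nonneg (u y),
        norm_nonneg (u x), norm_nonneg (u y - u x)]
    · refine ⟨y, hy1.le, by linarith, ?_⟩
      intro x hx
      have hx1 : y < x := hx.1
      have hxIcc : x ∈ Icc xm xp := ⟨by linarith, by have := hx.2; linarith⟩
      have hnotII : ¬ IntervalIntegrable g volume xm x := by
        intro hII
        apply hgood
        rw [intervalIntegrable_iff_integrableOn_Ioc_of_le hy1.le]
        rw [intervalIntegrable_iff_integrableOn_Ioc_of_le (by linarith : xm ≤ x)] at hII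
        exact hII.mono_set (Ioc_subset_Ioc le_rfl hx1.le)
      have hux : u x = u xm := by
        rw [hrep x hxIcc, intervalIntegral.integral_undef hnotII, add_zero]
      have huy : u y = u xm := by
        rw [hrep y hyIcc, intervalIntegral.integral_undef hgood, add_zero]
      rw [huy, ← hux]
      nlinarith [norm_nonneg (u x), sq_nonneg (‖u x‖), mul_nonneg (mul_nonneg
        (by norm_num : (0:ℝ) ≤ 2) hh.le) hG0]
  -- integrate the pointwise bound
  have hsubJ : Ioc a (a + h) ⊆ Ioo xm xp := fun x hx =>
    ⟨lt_of_le_of_lt haxm hx.1, lt_of_le_of_lt hx.2 haxp⟩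
  have hvolJ : (volume (Ioc a (a + h))).toReal = h := by
    rw [Real.volume_Ioc, ENNReal.toReal_ofReal (by linarith)]
    ring
  have hconst : ∫ _x in Ioc a (a + h), ‖u y‖ ^ 2 = h * ‖u y‖ ^ 2 := by
    rw [setIntegral_const, measureReal_def, hvolJ, smul_eq_mul]
  have hIntRHS : IntegrableOn (fun x => 2 * ‖u x‖ ^ 2 + 2 * h * G) (Ioc a (a + h)) volume := by
    apply Integrable.add
    · exact ((hu2.mono_set hsubJ).const_mul 2)
    · exact integrableOn_const measure_Ioc_lt_top.ne
  have step1 : ∫ _x in Ioc a (a + h), ‖u y‖ ^ 2 ≤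
      ∫ x in Ioc a (a + h), (2 * ‖u x‖ ^ 2 + 2 * h * G) := by
    apply setIntegral_mono_on
      (integrableOn_const measure_Ioc_lt_top.ne) hIntRHS measurableSet_Ioc hpt
  have step2 : ∫ x in Ioc a (a + h), (2 * ‖u x‖ ^ 2 + 2 * h * G) =
      2 * (∫ x in Ioc a (a + h), ‖u x‖ ^ 2) + 2 * h * G * h := by
    rw [integral_add ((hu2.mono_set hsubJ).const_mul 2)
      (integrableOn_const measure_Ioc_lt_top.ne),
      setIntegral_const, measureReal_def, hvolJ, smul_eq_mul, integral_const_mul]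
    ring
  have step3 : ∫ x in Ioc a (a + h), ‖u x‖ ^ 2 ≤ U := by
    apply setIntegral_mono_set hu2
      (Filter.Eventually.of_forall fun t => sq_nonneg _)
      (HasSubset.Subset.eventuallyLE hsubJ)
  calc h * ‖u y‖ ^ 2 = ∫ _x in Ioc a (a + h), ‖u y‖ ^ 2 := hconst.symm
    _ ≤ 2 * (∫ x in Ioc a (a + h), ‖u x‖ ^ 2) + 2 * h * G * h := by rw [← step2]; exact step1
    _ ≤ 2 * U + 2 * h ^ 2 * G := by nlinarith [step3]

/-- For every `s₀ ∈ ℝ` and `L > 0` there exists `C > 0` depending only on `s₀` and `L` such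
that for every bounded interval `(x₋, x₊)` of length `d = x₊ - x₋ ∈ (0, L)` with
`s₀ < (π/d)²` and midpoint `y`, every `α ∈ [F_d^D(s₀), 0)`, and every
`u ∈ W^{1,2}(x₋, x₊)` one has `∫ |u'|² + α |u(y)|² + (C/d²) ∫ |u|² ≥ 0`. -/
theorem stmt12 (s₀ L : ℝ) (hL : 0 < L) :
    ∃ C : ℝ, 0 < C ∧
      ∀ xm xp : ℝ, xm < xp → xp - xm < L → s₀ < (Real.pi / (xp - xm)) ^ 2 →
        ∀ α : ℝ, FD (xp - xm) s₀ ≤ α → α < 0 →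
          ∀ u g : ℝ → ℂ, HasW12Deriv xm xp u g →
            0 ≤ (∫ x in xm..xp, ‖g x‖ ^ 2) + α * ‖u ((xm + xp) / 2)‖ ^ 2 +
                (C / (xp - xm) ^ 2) * ∫ x in xm..xp, ‖u x‖ ^ 2 := by
  have hpi := Real.pi_pos
  set K := 2 * Real.pi + 4 + 2 * L * Real.sqrt (max (-s₀) 0) with hKdef
  have hK4 : 4 ≤ K := by nlinarith [Real.sqrt_nonneg (max (-s₀) 0), hL]
  have hK0 : 0 < K := by linarith
  refine ⟨8 * K ^ 2, by positivity, ?_⟩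
  intro xm xp hlt hdL hs α hα1 hα2 u g hug
  obtain ⟨hg2, hrep⟩ := hug
  set d := xp - xm with hddef
  have hd : 0 < d := sub_pos.mpr hlt
  set y := (xm + xp) / 2 with hydef
  set h := d / (4 * K) with hhdef
  have hh : 0 < h := by positivity
  have hh2 : h ≤ d / 4 := by
    rw [hhdef, div_le_div_iff₀ (by positivity) (by norm_num : (0:ℝ) < 4)]
    nlinarith
  have hKd : -α ≤ K / d := by
    have := FD_lower s₀ L d hd hdL hs
    have h2 : -(K / d) ≤ α := le_trans this hα1
    linarith
  have htr := key_trace xm xp hlt u g hg2 hrep h hh hh2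
  set G := ∫ x in Ioo xm xp, ‖g x‖ ^ 2 with hGdef
  set U := ∫ x in Ioo xm xp, ‖u x‖ ^ 2 with hUdef
  have hG0 : 0 ≤ G := setIntegral_nonneg measurableSet_Ioo fun x _ => sq_nonneg _
  have hU0 : 0 ≤ U := setIntegral_nonneg measurableSet_Ioo fun x _ => sq_nonneg _
  have hgint : (∫ x in xm..xp, ‖g x‖ ^ 2) = G := by
    rw [intervalIntegral.integral_of_le hlt.le, integral_Ioc_eq_integral_Ioo]
  have huint : (∫ x in xm..xp, ‖u x‖ ^ 2) = U := by
    rw [intervalIntegral.integral_of_le hlt.le, integral_Ioc_eq_integral_Ioo]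
  rw [hgint, huint]
  set B := ‖u y‖ ^ 2 with hBdef
  have hB0 : 0 ≤ B := sq_nonneg _
  -- clear denominators
  have f2' : -α * d ≤ K := by
    rw [← le_div_iff₀ hd] at *
    exact hKd
  have f1'' : 4 * K * d * B ≤ 32 * K ^ 2 * U + 2 * d ^ 2 * G := by
    have h16 : (0:ℝ) ≤ 16 * K ^ 2 := by positivity
    have := mul_le_mul_of_nonneg_left htr h16
    have e1 : 16 * K ^ 2 * (h * B) = 4 * K * d * B := by
      rw [hhdef]; field_simp; ring
    have e2 : 16 * K ^ 2 * (2 * U + 2 * h ^ 2 * G) = 32 * K ^ 2 * U + 2 * d ^ 2 * G := by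
      rw [hhdef]; field_simp; ring
    rw [e1, e2] at this
    exact this
  have hd2 : (0:ℝ) < d ^ 2 := by positivity
  have key : 0 ≤ (G + α * B + 8 * K ^ 2 / d ^ 2 * U) * d ^ 2 := by
    have e : (G + α * B + 8 * K ^ 2 / d ^ 2 * U) * d ^ 2 =
        G * d ^ 2 + α * B * d ^ 2 + 8 * K ^ 2 * U := by
      field_simp
    rw [e]
    nlinarith [mul_le_mul_of_nonneg_right f2' (mul_nonneg hB0 hd.le),
      mul_nonneg hG0 hd2.le, f1'']
  have h0 : (0:ℝ) * d ^ 2 ≤ (G + α * B + 8 * K ^ 2 / d ^ 2 * U) * d ^ 2 := by linarith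
  exact le_of_mul_le_mul_right h0 hd2
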